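/- arXiv:2004.11354 — 3 statements merged into one kernel-verified Lean document; each statement's English description precedes it below -/
import Mathlib

section
/- Let K : ℝ^d → ℝ (d ≥ 2) be a spherically symmetric C³ function with compact support. With ρ₁ = (3,0,…,0), ρ₂ = (2,1,0,…,0), the ratio a_K = ∫ [K^{(ρ₁)}]² / ∫ [K^{(ρ₂)}]² satisfies a_K ≥ 1, provided ∫ [K^{(ρ₂)}]² > 0. -/
open MeasureTheory

/-- Partial derivative of `f` in the `i`-th coordinate direction. -/
noncomputable def partialDeriv (d : ℕ) (i : Fin d)
    (f : EuclideanSpace ℝ (Fin d) → ℝ) : EuclideanSpace ℝ (Fin d) → ℝ :=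
  fun x => fderiv ℝ f x (EuclideanSpace.single i 1)

/-- Iterated partial derivative along a list of coordinate directions. -/
noncomputable def iterPartialDeriv (d : ℕ) :
    List (Fin d) → (EuclideanSpace ℝ (Fin d) → ℝ) → EuclideanSpace ℝ (Fin d) → ℝ
  | [], f => f
  | i :: L, f => partialDeriv d i (iterPartialDeriv d L f)

/-- Canonical list of directions associated with a multi-index `α : Fin d → ℕ`. -/
def multiIndexList (d : ℕ) (α : Fin d → ℕ) : List (Fin d) :=
  (List.finRange d).flatMap fun i => List.replicate (α i) i

/-- The partial derivative `f^{(α)}` of multi-index `α`. -/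
noncomputable def mderiv (d : ℕ) (α : Fin d → ℕ)
    (f : EuclideanSpace ℝ (Fin d) → ℝ) : EuclideanSpace ℝ (Fin d) → ℝ :=
  iterPartialDeriv d (multiIndexList d α) f

open Convolution ContinuousLinearMap Metric Set Filter Topology Pointwise

section Auxiliary

variable {d : ℕ}

lemma contDiff_partialDeriv {f : EuclideanSpace ℝ (Fin d) → ℝ} {n : ℕ∞} (i : Fin d)
    (hf : ContDiff ℝ (n + 1) f) : ContDiff ℝ n (partialDeriv d i f) := by
  have h1 : ContDiff ℝ n (fderiv ℝ f) := hf.fderiv_right le_rfl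
  exact h1.clm_apply contDiff_const

lemma contDiff_iter (L : List (Fin d)) (n : ℕ) {f : EuclideanSpace ℝ (Fin d) → ℝ}
    (hf : ContDiff ℝ (n + L.length : ℕ) f) :
    ContDiff ℝ (n : ℕ) (iterPartialDeriv d L f) := by
  induction L generalizing n f with
  | nil => simpa [iterPartialDeriv] using hf
  | cons i L ih =>
    show ContDiff ℝ (n:ℕ∞) (partialDeriv d i (iterPartialDeriv d L f))
    have h2 : ContDiff ℝ (((n+1) + L.length : ℕ) : ℕ∞) f := by
      convert hf using 2; simp [List.length_cons]; ring
    have : ContDiff ℝ ((n+1 : ℕ) : ℕ∞) (iterPartialDeriv d L f) := ih (n+1) h2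
    apply contDiff_partialDeriv
    exact_mod_cast this

lemma hcs_partialDeriv {f : EuclideanSpace ℝ (Fin d) → ℝ} (i : Fin d)
    (hf : HasCompactSupport f) : HasCompactSupport (partialDeriv d i f) :=
  (hf.fderiv ℝ).comp_left (g := fun A : EuclideanSpace ℝ (Fin d) →L[ℝ] ℝ =>
    A (EuclideanSpace.single i 1)) rfl

lemma hcs_iter {L : List (Fin d)} {f : EuclideanSpace ℝ (Fin d) → ℝ}
    (hf : HasCompactSupport f) : HasCompactSupport (iterPartialDeriv d L f) := by
  induction L with
  | nil => exact hf
  | cons i L ih => exact hcs_partialDeriv i ih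

lemma pd_comm {f : EuclideanSpace ℝ (Fin d) → ℝ} (hf : ContDiff ℝ 2 f) (i j : Fin d) :
    partialDeriv d i (partialDeriv d j f) = partialDeriv d j (partialDeriv d i f) := by
  funext x
  have hdf : Differentiable ℝ (fderiv ℝ f) :=
    (hf.fderiv_right (m := 1) le_rfl).differentiable (by norm_num)
  have h1 : ∀ (a b : Fin d),
      partialDeriv d a (partialDeriv d b f) x
        = fderiv ℝ (fderiv ℝ f) x (EuclideanSpace.single a 1) (EuclideanSpace.single b 1) := by
    intro a b
    show fderiv ℝ (fun y => fderiv ℝ f y (EuclideanSpace.single b 1)) x _ = _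
    rw [fderiv_clm_apply (hdf x) (differentiableAt_const _)]
    simp
  rw [h1, h1]
  exact (hf.contDiffAt.isSymmSndFDerivAt (by norm_num)) _ _

lemma integ_cc {u v : EuclideanSpace ℝ (Fin d) → ℝ} (hu : Continuous u) (hv : Continuous v)
    (hsu : HasCompactSupport u) : Integrable (fun x => u x * v x) :=
  (hu.mul hv).integrable_of_hasCompactSupport (hsu.mul_right)

/-- Integration by parts: `∫ u * (∂ⱼ v) = - ∫ (∂ⱼ u) * v`. -/
lemma ibp (j : Fin d) {u v : EuclideanSpace ℝ (Fin d) → ℝ}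
    (hu : ContDiff ℝ 1 u) (hv : ContDiff ℝ 1 v)
    (hsu : HasCompactSupport u) (hsv : HasCompactSupport v) :
    ∫ x, u x * partialDeriv d j v x = - ∫ x, partialDeriv d j u x * v x := by
  have hcu' : Continuous (partialDeriv d j u) :=
    (contDiff_partialDeriv (n := 0) j hu).continuous
  have hcv' : Continuous (partialDeriv d j v) :=
    (contDiff_partialDeriv (n := 0) j hv).continuous
  exact integral_mul_fderiv_eq_neg_fderiv_mul_of_integrable
    (integ_cc hcu' hv.continuous (hcs_partialDeriv j hsu))
    (integ_cc hu.continuous hcv' hsu)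
    (integ_cc hu.continuous hv.continuous hsu)
    (fun x _ => hu.differentiable (by norm_num) x) (fun x _ => hv.differentiable (by norm_num) x)

/-- For a `C⁴` compactly supported `f`:
`∫ (∂ᵢ∂ᵢ∂ᵢ f)(∂ⱼ∂ⱼ∂ᵢ f) = ∫ (∂ⱼ∂ᵢ∂ᵢ f)²`. -/
lemma smooth_identity {f : EuclideanSpace ℝ (Fin d) → ℝ}
    (hf : ContDiff ℝ 4 f) (hs : HasCompactSupport f) (i j : Fin d) :
    ∫ x, iterPartialDeriv d [i,i,i] f x * iterPartialDeriv d [j,j,i] f x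
      = ∫ x, (iterPartialDeriv d [j,i,i] f x) ^ 2 := by
  set a2 := iterPartialDeriv d [i,i] f with ha2
  set q := iterPartialDeriv d [j,i] f with hq
  have ha2c : ContDiff ℝ (2:ℕ) a2 := contDiff_iter [i,i] 2 (by norm_num; exact hf)
  have hqc : ContDiff ℝ (2:ℕ) q := contDiff_iter [j,i] 2 (by norm_num; exact hf)
  have hAc : ContDiff ℝ (1:ℕ) (partialDeriv d i a2) :=
    contDiff_partialDeriv i (by exact_mod_cast ha2c)
  have hsa2 : HasCompactSupport a2 := hcs_iter hs
  have hsq : HasCompactSupport q := hcs_iter hs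
  have step1 : ∫ x, partialDeriv d i a2 x * partialDeriv d j q x
      = - ∫ x, partialDeriv d j (partialDeriv d i a2) x * q x :=
    ibp j hAc (by exact_mod_cast hqc.of_le (by norm_num)) (hcs_partialDeriv i hsa2) hsq
  have comm1 : partialDeriv d j (partialDeriv d i a2) = partialDeriv d i (partialDeriv d j a2) :=
    (pd_comm (by exact_mod_cast ha2c) i j).symm
  have hpja2 : ContDiff ℝ (1:ℕ) (partialDeriv d j a2) := by
    have : ContDiff ℝ ((1:ℕ):ℕ∞) (iterPartialDeriv d [j,i,i] f) :=
      contDiff_iter [j,i,i] 1 (by norm_num; exact hf)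
    exact this
  have step3 : ∫ x, q x * partialDeriv d i (partialDeriv d j a2) x
      = - ∫ x, partialDeriv d i q x * partialDeriv d j a2 x :=
    ibp i (by exact_mod_cast hqc.of_le (by norm_num)) hpja2 hsq (hcs_partialDeriv j hsa2)
  have comm2 : partialDeriv d i q = partialDeriv d j a2 := by
    have : partialDeriv d i (partialDeriv d j (iterPartialDeriv d [i] f))
        = partialDeriv d j (partialDeriv d i (iterPartialDeriv d [i] f)) :=
      pd_comm (by
        have : ContDiff ℝ ((2:ℕ):ℕ∞) (iterPartialDeriv d [i] f) :=
          contDiff_iter [i] 2 (by norm_num; exact hf.of_le (by norm_num))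
        exact_mod_cast this) i j
    exact this
  calc ∫ x, iterPartialDeriv d [i,i,i] f x * iterPartialDeriv d [j,j,i] f x
      = ∫ x, partialDeriv d i a2 x * partialDeriv d j q x := rfl
    _ = - ∫ x, partialDeriv d j (partialDeriv d i a2) x * q x := step1
    _ = - ∫ x, q x * partialDeriv d i (partialDeriv d j a2) x := by
        rw [comm1]; congr 1; apply integral_congr_ae; filter_upwards with x; ring
    _ = ∫ x, partialDeriv d i q x * partialDeriv d j a2 x := by rw [step3, neg_neg]
    _ = ∫ x, (iterPartialDeriv d [j,i,i] f x) ^ 2 := by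
        rw [comm2]; apply integral_congr_ae; filter_upwards with x
        have hei : iterPartialDeriv d [j,i,i] f = partialDeriv d j a2 := rfl
        rw [hei]; ring

/-! ### Coordinate permutations -/

noncomputable def sw (e : Fin d ≃ Fin d) :
    EuclideanSpace ℝ (Fin d) ≃ₗᵢ[ℝ] EuclideanSpace ℝ (Fin d) :=
  LinearIsometryEquiv.piLpCongrLeft 2 ℝ ℝ e

lemma sw_single (e : Fin d ≃ Fin d) (i : Fin d) (v : ℝ) :
    sw e (EuclideanSpace.single i v) = EuclideanSpace.single (e i) v := by
  rw [EuclideanSpace.single, EuclideanSpace.single]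
  exact LinearIsometryEquiv.piLpCongrLeft_single (p := 2) (𝕜 := ℝ) (E := ℝ) e i v

lemma pd_comp_sw (e : Fin d ≃ Fin d) {f : EuclideanSpace ℝ (Fin d) → ℝ}
    (hf : Differentiable ℝ f) (i : Fin d) :
    partialDeriv d i (f ∘ (sw e)) = (partialDeriv d (e i) f) ∘ (sw e) := by
  funext x
  have h : HasFDerivAt (f ∘ (sw e))
      ((fderiv ℝ f (sw e x)).comp ((sw e).toContinuousLinearEquiv : _ →L[ℝ] _)) x :=
    (hf (sw e x)).hasFDerivAt.comp x ((sw e).toContinuousLinearEquiv.hasFDerivAt)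
  show fderiv ℝ (f ∘ (sw e)) x (EuclideanSpace.single i 1) = _
  rw [h.fderiv]
  show fderiv ℝ f (sw e x) (sw e (EuclideanSpace.single i 1)) = _
  rw [sw_single]
  rfl

lemma integral_comp_sw (e : Fin d ≃ Fin d) (g : EuclideanSpace ℝ (Fin d) → ℝ) :
    ∫ x, g (sw e x) = ∫ x, g x :=
  (sw e).measurePreserving.integral_comp (sw e).toHomeomorph.measurableEmbedding g

lemma contDiff_comp_sw (e : Fin d ≃ Fin d) {f : EuclideanSpace ℝ (Fin d) → ℝ} {n : ℕ∞}
    (hf : ContDiff ℝ n f) : ContDiff ℝ n (f ∘ (sw e)) := by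
  apply hf.comp
  exact (sw e).toContinuousLinearEquiv.contDiff

lemma iter_comp_sw (e : Fin d ≃ Fin d) (L : List (Fin d))
    {f : EuclideanSpace ℝ (Fin d) → ℝ} (hf : ContDiff ℝ (L.length : ℕ) f) :
    iterPartialDeriv d L (f ∘ (sw e)) = (iterPartialDeriv d (L.map e) f) ∘ (sw e) := by
  induction L generalizing f with
  | nil => rfl
  | cons i L ih =>
    have hf' : ContDiff ℝ (L.length : ℕ) f := hf.of_le (by exact_mod_cast Nat.le_succ _)
    show partialDeriv d i (iterPartialDeriv d L (f ∘ (sw e))) = _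
    rw [ih hf']
    have hdiff : Differentiable ℝ (iterPartialDeriv d (L.map e) f) := by
      have : ContDiff ℝ ((1:ℕ):ℕ∞) (iterPartialDeriv d (L.map e) f) := by
        apply contDiff_iter
        rw [List.length_map]
        have : (1 + L.length) = (i :: L).length := by simp [List.length_cons]; ring
        rw [this]
        exact_mod_cast hf
      exact this.differentiable (by norm_num)
    rw [pd_comp_sw e hdiff i]
    rfl

/-! ### Mollification -/

noncomputable def conv (φ : ContDiffBump (0 : EuclideanSpace ℝ (Fin d)))
    (g : EuclideanSpace ℝ (Fin d) → ℝ) : EuclideanSpace ℝ (Fin d) → ℝ :=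
  (φ.normed volume) ⋆[lsmul ℝ ℝ, volume] g

noncomputable def bump (d : ℕ) (n : ℕ) : ContDiffBump (0 : EuclideanSpace ℝ (Fin d)) :=
  ⟨((n:ℝ)+1)⁻¹/2, ((n:ℝ)+1)⁻¹, by positivity, by
    have : (0:ℝ) < ((n:ℝ)+1)⁻¹ := by positivity
    linarith⟩

lemma bump_rOut_le_one (n : ℕ) : (bump d n).rOut ≤ 1 := by
  rw [bump]
  rw [inv_le_one₀ (by positivity)]
  simp

lemma bump_rOut_tendsto : Tendsto (fun n => (bump d n).rOut) atTop (𝓝 0) :=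
  tendsto_one_div_add_atTop_nhds_zero_nat.congr (by intro n; rw [bump]; simp [one_div])

lemma pd_conv {φ : ContDiffBump (0 : EuclideanSpace ℝ (Fin d))}
    (i : Fin d) {g : EuclideanSpace ℝ (Fin d) → ℝ}
    (hcg : HasCompactSupport g) (hg : ContDiff ℝ 1 g) :
    partialDeriv d i (conv φ g) = conv φ (partialDeriv d i g) := by
  funext x
  have hf : LocallyIntegrable (φ.normed volume) volume :=
    φ.integrable_normed.locallyIntegrable
  have h := (hcg.hasFDerivAt_convolution_right (lsmul ℝ ℝ) hf hg x).fderiv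
  show fderiv ℝ (conv φ g) x (EuclideanSpace.single i 1) = _
  show fderiv ℝ ((φ.normed volume) ⋆[lsmul ℝ ℝ, volume] g) x (EuclideanSpace.single i 1) = _
  rw [h]
  rw [convolution_precompR_apply (lsmul ℝ ℝ) hf (hcg.fderiv ℝ)
    (hg.continuous_fderiv (by norm_num)) x (EuclideanSpace.single i 1)]
  rfl

lemma iter_conv {φ : ContDiffBump (0 : EuclideanSpace ℝ (Fin d))}
    (L : List (Fin d)) {g : EuclideanSpace ℝ (Fin d) → ℝ}
    (hcg : HasCompactSupport g) (hg : ContDiff ℝ (L.length : ℕ) g) :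
    iterPartialDeriv d L (conv φ g) = conv φ (iterPartialDeriv d L g) := by
  induction L generalizing g with
  | nil => rfl
  | cons i L ih =>
    have hg' : ContDiff ℝ (L.length : ℕ) g := hg.of_le (by exact_mod_cast Nat.le_succ _)
    show partialDeriv d i (iterPartialDeriv d L (conv φ g)) = _
    rw [ih hcg hg']
    have h1 : ContDiff ℝ ((1:ℕ):ℕ∞) (iterPartialDeriv d L g) := by
      apply contDiff_iter
      have : (1 + L.length) = (i :: L).length := by simp [List.length_cons]; ring
      rw [this]
      exact_mod_cast hg
    rw [pd_conv i (hcs_iter hcg) (by exact_mod_cast h1)]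
    rfl

lemma conv_contDiff {φ : ContDiffBump (0 : EuclideanSpace ℝ (Fin d))}
    (g : EuclideanSpace ℝ (Fin d) → ℝ) (hg : LocallyIntegrable g volume)
    (n : ℕ∞) : ContDiff ℝ n (conv φ g) :=
  HasCompactSupport.contDiff_convolution_left _ φ.hasCompactSupport_normed
    (φ.contDiff_normed) hg

lemma conv_hcs {φ : ContDiffBump (0 : EuclideanSpace ℝ (Fin d))}
    {g : EuclideanSpace ℝ (Fin d) → ℝ} (hcg : HasCompactSupport g) :
    HasCompactSupport (conv φ g) :=
  HasCompactSupport.convolution (L := lsmul ℝ ℝ) φ.hasCompactSupport_normed hcg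

lemma conv_bound {φ : ContDiffBump (0 : EuclideanSpace ℝ (Fin d))}
    {g : EuclideanSpace ℝ (Fin d) → ℝ} (hcg : HasCompactSupport g) (hg : Continuous g)
    {M : ℝ} (hM : ∀ x, ‖g x‖ ≤ M) (x : EuclideanSpace ℝ (Fin d)) :
    ‖conv φ g x‖ ≤ M := by
  have hf : LocallyIntegrable (φ.normed volume) volume := φ.integrable_normed.locallyIntegrable
  have hex : Integrable (fun t => (φ.normed volume t) • g (x - t)) volume := by
    have h := hcg.convolutionExists_right (lsmul ℝ ℝ) hf hg x
    simpa only [ConvolutionExistsAt, lsmul_apply] using h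
  have h0 : conv φ g x = ∫ t, (φ.normed volume t) • g (x - t) := by
    rw [conv, convolution_def]; simp only [lsmul_apply]
  rw [h0]
  calc ‖∫ t, (φ.normed volume t) • g (x - t)‖
      ≤ ∫ t, ‖(φ.normed volume t) • g (x - t)‖ := norm_integral_le_integral_norm _
    _ ≤ ∫ t, (φ.normed volume t) * M := by
        apply integral_mono hex.norm (φ.integrable_normed.mul_const M)
        intro t
        dsimp only
        rw [norm_smul]
        have := φ.nonneg_normed (μ := volume) t
        have h2 : ‖φ.normed volume t‖ = φ.normed volume t := by
          rw [Real.norm_eq_abs, abs_of_nonneg this]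
        rw [h2]
        exact mul_le_mul_of_nonneg_left (hM _) this
    _ = M := by rw [integral_mul_const, φ.integral_normed, one_mul]

lemma conv_support_subset {φ : ContDiffBump (0 : EuclideanSpace ℝ (Fin d))}
    (hr : φ.rOut ≤ 1) (g : EuclideanSpace ℝ (Fin d) → ℝ) :
    Function.support (conv φ g)
      ⊆ closedBall (0 : EuclideanSpace ℝ (Fin d)) 1 + tsupport g := by
  refine (support_convolution_subset (lsmul ℝ ℝ)).trans ?_
  apply Set.add_subset_add
  · rw [φ.support_normed_eq]
    exact (ball_subset_closedBall).trans (closedBall_subset_closedBall hr)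
  · exact subset_tsupport g

lemma tendsto_integral_conv_mul {h₁ h₂ : EuclideanSpace ℝ (Fin d) → ℝ}
    (hc₁ : Continuous h₁) (hs₁ : HasCompactSupport h₁)
    (hc₂ : Continuous h₂) (hs₂ : HasCompactSupport h₂) :
    Tendsto (fun n => ∫ x, conv (bump d n) h₁ x * conv (bump d n) h₂ x) atTop
      (𝓝 (∫ x, h₁ x * h₂ x)) := by
  obtain ⟨M₁, hM₁⟩ := hs₁.exists_bound_of_continuous hc₁
  obtain ⟨M₂, hM₂⟩ := hs₂.exists_bound_of_continuous hc₂
  have hM₁0 : 0 ≤ M₁ := le_trans (norm_nonneg _) (hM₁ 0)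
  have hM₂0 : 0 ≤ M₂ := le_trans (norm_nonneg _) (hM₂ 0)
  set S : Set (EuclideanSpace ℝ (Fin d)) :=
    closedBall (0 : EuclideanSpace ℝ (Fin d)) 1 + (tsupport h₁ ∪ tsupport h₂) with hS
  have hScomp : IsCompact S := (isCompact_closedBall _ _).add (hs₁.union hs₂)
  have hsub : ∀ (h : EuclideanSpace ℝ (Fin d) → ℝ), tsupport h ⊆ tsupport h₁ ∪ tsupport h₂ →
      ∀ n, ∀ x ∉ S, conv (bump d n) h x = 0 := by
    intro h hsubt n x hx
    by_contra h0
    apply hx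
    have := conv_support_subset (φ := bump d n) (bump_rOut_le_one n) h (by exact h0)
    exact Set.add_subset_add_left hsubt this
  apply tendsto_integral_of_dominated_convergence (S.indicator (fun _ => M₁ * M₂))
  · intro n
    have c1 : Continuous (conv (bump d n) h₁) :=
      hs₁.continuous_convolution_right _ ((bump d n).integrable_normed.locallyIntegrable) hc₁
    have c2 : Continuous (conv (bump d n) h₂) :=
      hs₂.continuous_convolution_right _ ((bump d n).integrable_normed.locallyIntegrable) hc₂
    exact (c1.mul c2).aestronglyMeasurable
  · rw [integrable_indicator_iff hScomp.isClosed.measurableSet]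
    exact integrableOn_const hScomp.measure_lt_top.ne
  · intro n
    filter_upwards with x
    by_cases hx : x ∈ S
    · rw [Set.indicator_of_mem hx]
      rw [norm_mul]
      exact mul_le_mul (conv_bound hs₁ hc₁ hM₁ x) (conv_bound hs₂ hc₂ hM₂ x)
        (norm_nonneg _) hM₁0
    · rw [Set.indicator_of_notMem hx]
      rw [hsub h₁ subset_union_left n x hx]
      simp
  · filter_upwards with x
    exact (ContDiffBump.convolution_tendsto_right_of_continuous bump_rOut_tendsto hc₁ x).mul
      (ContDiffBump.convolution_tendsto_right_of_continuous bump_rOut_tendsto hc₂ x)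

/-- AM–GM for integrals. -/
lemma integral_mul_le {u v : EuclideanSpace ℝ (Fin d) → ℝ}
    (hu : Continuous u) (hv : Continuous v)
    (hsu : HasCompactSupport u) (hsv : HasCompactSupport v) :
    ∫ x, u x * v x ≤ (∫ x, (u x)^2) / 2 + (∫ x, (v x)^2) / 2 := by
  have h1 : Integrable (fun x => u x * v x) := integ_cc hu hv hsu
  have h2 : Integrable (fun x => (u x)^2) := by
    have := integ_cc hu hu hsu
    simpa [pow_two] using this
  have h3 : Integrable (fun x => (v x)^2) := by
    have := integ_cc hv hv hsv
    simpa [pow_two] using this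
  have key : ∫ x, u x * v x ≤ ∫ x, ((u x)^2/2 + (v x)^2/2) := by
    apply integral_mono h1 (by exact (h2.div_const 2).add (h3.div_const 2))
    intro x
    dsimp only
    nlinarith [sq_nonneg (u x - v x)]
  calc ∫ x, u x * v x ≤ ∫ x, ((u x)^2/2 + (v x)^2/2) := key
    _ = (∫ x, (u x)^2) / 2 + (∫ x, (v x)^2) / 2 := by
        rw [integral_add (h2.div_const 2) (h3.div_const 2), integral_div, integral_div]

end Auxiliary

lemma multiIndexList_eq (n : ℕ) (α : Fin (n+2) → ℕ)
    (hα : ∀ i : Fin (n+2), 2 ≤ i.val → α i = 0) :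
    multiIndexList (n+2) α
      = List.replicate (α 0) 0 ++ List.replicate (α 1) 1 := by
  rw [multiIndexList]
  rw [List.finRange_succ, List.finRange_succ]
  simp only [List.flatMap_cons, List.map_cons, List.flatMap_map, List.map_map]
  have h1 : ((0 : Fin (n+1)).succ) = (1 : Fin (n+2)) := rfl
  have h2 : (List.finRange n).flatMap
      (fun j => List.replicate (α ((Fin.succ (Fin.succ j)))) (Fin.succ (Fin.succ j))) = [] := by
    rw [List.flatMap_eq_nil_iff]
    intro j hj
    rw [hα _ (by simp [Fin.succ])]
    rfl
  simp only [Function.comp] at *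
  rw [h2, h1]
  simp

/-- For `d ≥ 2` and a spherically symmetric `C³` compactly supported kernel `K`,
with `ρ₁ = (3,0,…,0)` and `ρ₂ = (2,1,0,…,0)`, the ratio
`a_K = ∫ [K^{(ρ₁)}]² / ∫ [K^{(ρ₂)}]²` satisfies `a_K ≥ 1`. -/
theorem aK_ge_one (d : ℕ) (hd : 2 ≤ d)
    (K : EuclideanSpace ℝ (Fin d) → ℝ)
    (hsym : ∀ x y : EuclideanSpace ℝ (Fin d), ‖x‖ = ‖y‖ → K x = K y)
    (hK : ContDiff ℝ 3 K) (hsupp : HasCompactSupport K)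
    (ρ₁ ρ₂ : Fin d → ℕ)
    (hρ₁ : ρ₁ = fun i => if i = (⟨0, by omega⟩ : Fin d) then 3 else 0)
    (hρ₂ : ρ₂ = fun i => if i = (⟨0, by omega⟩ : Fin d) then 2
      else if i = (⟨1, by omega⟩ : Fin d) then 1 else 0)
    (hpos : 0 < ∫ u, (mderiv d ρ₂ K u) ^ 2) :
    1 ≤ (∫ u, (mderiv d ρ₁ K u) ^ 2) / ∫ u, (mderiv d ρ₂ K u) ^ 2 := by
  obtain ⟨n, rfl⟩ : ∃ n, d = n + 2 := ⟨d - 2, by omega⟩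
  have e0 : (⟨0, by omega⟩ : Fin (n+2)) = 0 := rfl
  have e1 : (⟨1, by omega⟩ : Fin (n+2)) = 1 := by
    apply Fin.ext
    simp
  have h01 : (0 : Fin (n+2)) ≠ 1 := by
    intro h
    have := congrArg Fin.val h
    simp at this
  have hK3 : ContDiff ℝ ((3:ℕ) : ℕ∞) K := by exact_mod_cast hK
  have hK2 : ContDiff ℝ 2 K := hK.of_le (by norm_num)
  -- compute the multi-index lists
  have hL₁ : multiIndexList (n+2) ρ₁ = [0,0,0] := by
    rw [hρ₁, multiIndexList_eq]
    · simp only [e0, e1]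
      simp [Ne.symm h01]
    · intro i hi
      simp only [e0, e1]
      rw [if_neg]
      intro h; rw [h] at hi; simp at hi
  have hL₂ : multiIndexList (n+2) ρ₂ = [0,0,1] := by
    rw [hρ₂, multiIndexList_eq]
    · simp only [e0, e1]
      simp [Ne.symm h01]
    · intro i hi
      simp only [e0, e1]
      rw [if_neg, if_neg]
      · intro h; rw [h] at hi; simp at hi
      · intro h; rw [h] at hi; simp at hi
  set A := iterPartialDeriv (n+2) [0,0,0] K with hA
  set B := iterPartialDeriv (n+2) [0,0,1] K with hB
  set C := iterPartialDeriv (n+2) [1,1,0] K with hC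
  set P := iterPartialDeriv (n+2) [1,0,0] K with hP
  have hmd₁ : mderiv (n+2) ρ₁ K = A := by rw [mderiv, hL₁]
  have hmd₂ : mderiv (n+2) ρ₂ K = B := by rw [mderiv, hL₂]
  simp only [hmd₁, hmd₂] at hpos ⊢
  -- continuity and compact support of the third derivatives
  have hcont : ∀ L : List (Fin (n+2)), L.length = 3 →
      Continuous (iterPartialDeriv (n+2) L K) := by
    intro L hL
    have : ContDiff ℝ ((0:ℕ):ℕ∞) (iterPartialDeriv (n+2) L K) := by
      apply contDiff_iter
      rw [hL]
      exact_mod_cast hK3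
    exact this.continuous
  have hcsA : HasCompactSupport A := hcs_iter hsupp
  have hcsB : HasCompactSupport B := hcs_iter hsupp
  have hcsC : HasCompactSupport C := hcs_iter hsupp
  have hcsP : HasCompactSupport P := hcs_iter hsupp
  have hcA : Continuous A := hcont _ rfl
  have hcB : Continuous B := hcont _ rfl
  have hcC : Continuous C := hcont _ rfl
  have hcP : Continuous P := hcont _ rfl
  -- Step 1 : B = P  (Clairaut)
  have hpd0K : ContDiff ℝ 2 (partialDeriv (n+2) (0 : Fin (n+2)) K) := by
    apply contDiff_partialDeriv
    norm_num
    exact hK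
  have hBP : B = P := by
    rw [hB, hP]
    show partialDeriv (n+2) 0 (partialDeriv (n+2) 0 (partialDeriv (n+2) 1 K))
      = partialDeriv (n+2) 1 (partialDeriv (n+2) 0 (partialDeriv (n+2) 0 K))
    rw [pd_comm hK2 0 1]
    exact pd_comm hpd0K 0 1
  -- Step 2 : ∫ B² = ∫ C²  (spherical symmetry)
  have hσ : ∫ x, B x * B x = ∫ x, C x * C x := by
    set e : Fin (n+2) ≃ Fin (n+2) := Equiv.swap 0 1 with he
    have hKσ : K ∘ (sw e) = K := by
      funext x
      exact hsym _ _ ((sw e).norm_map x)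
    have hmap : ([0,0,1] : List (Fin (n+2))).map e = [1,1,0] := by
      simp [he, Equiv.swap_apply_left, Equiv.swap_apply_right]
    have h2 : iterPartialDeriv (n+2) [0,0,1] (K ∘ (sw e))
        = (iterPartialDeriv (n+2) [1,1,0] K) ∘ (sw e) := by
      rw [iter_comp_sw e [0,0,1] (by norm_num; exact_mod_cast hK3), hmap]
    rw [hKσ] at h2
    have hBC : B = C ∘ (sw e) := h2
    rw [hBC]
    exact integral_comp_sw e (fun x => C x * C x)
  -- Step 3 : approximation and the key inequality
  have key : ∫ x, P x * P x ≤ (∫ x, A x * A x) / 2 + (∫ x, C x * C x) / 2 := by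
    apply le_of_tendsto_of_tendsto' (tendsto_integral_conv_mul hcP hcsP hcP hcsP)
      (((tendsto_integral_conv_mul hcA hcsA hcA hcsA).div_const 2).add
        ((tendsto_integral_conv_mul hcC hcsC hcC hcsC).div_const 2))
    intro m
    set φ := bump (n+2) m with hφ
    set f := conv φ K with hf
    have hf4 : ContDiff ℝ 4 f := by
      have := conv_contDiff (φ := φ) K (hK.continuous.locallyIntegrable) 4
      exact_mod_cast this
    have hfs : HasCompactSupport f := conv_hcs hsupp
    have hconvL : ∀ L : List (Fin (n+2)), L.length = 3 →
        iterPartialDeriv (n+2) L f = conv φ (iterPartialDeriv (n+2) L K) := by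
      intro L hL
      apply iter_conv L hsupp
      rw [hL]
      exact_mod_cast hK3
    have hid := smooth_identity hf4 hfs (0 : Fin (n+2)) 1
    rw [hconvL [0,0,0] rfl, hconvL [1,1,0] rfl, hconvL [1,0,0] rfl] at hid
    have hsq : ∀ g : EuclideanSpace ℝ (Fin (n+2)) → ℝ,
        (∫ x, (g x)^2) = ∫ x, g x * g x := by
      intro g
      apply integral_congr_ae
      filter_upwards with x
      ring
    have hcontA : Continuous (conv φ A) :=
      hcsA.continuous_convolution_right _ (φ.integrable_normed.locallyIntegrable) hcA
    have hcontC : Continuous (conv φ C) :=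
      hcsC.continuous_convolution_right _ (φ.integrable_normed.locallyIntegrable) hcC
    have hamgm := integral_mul_le hcontA hcontC (conv_hcs hcsA) (conv_hcs hcsC)
    calc ∫ x, conv φ P x * conv φ P x
        = ∫ x, (conv φ P x)^2 := (hsq _).symm
      _ = ∫ x, conv φ A x * conv φ C x := hid.symm
      _ ≤ (∫ x, (conv φ A x)^2)/2 + (∫ x, (conv φ C x)^2)/2 := hamgm
      _ = (∫ x, conv φ A x * conv φ A x)/2 + (∫ x, conv φ C x * conv φ C x)/2 := by
          rw [hsq, hsq]
  -- Step 4 : conclude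
  have hsq : ∀ g : EuclideanSpace ℝ (Fin (n+2)) → ℝ,
      (∫ x, (g x)^2) = ∫ x, g x * g x := by
    intro g
    apply integral_congr_ae
    filter_upwards with x
    ring
  have hfinal : ∫ x, (B x)^2 ≤ ∫ x, (A x)^2 := by
    have h1 : ∫ x, B x * B x ≤ (∫ x, A x * A x) / 2 + (∫ x, B x * B x) / 2 := by
      calc ∫ x, B x * B x = ∫ x, P x * P x := by rw [hBP]
        _ ≤ (∫ x, A x * A x) / 2 + (∫ x, C x * C x) / 2 := key
        _ = (∫ x, A x * A x) / 2 + (∫ x, B x * B x) / 2 := by rw [hσ]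
    rw [hsq A, hsq B]
    linarith
  rw [le_div_iff₀ hpos, one_mul]
  exact hfinal
end

section
/- Let K : ℝ^d → ℝ (d ≥ 3) be a spherically symmetric C³ function with compact support. With ρ₂ = (2,1,0,…,0) and ρ₃ = (1,1,1,0,…,0), the ratio b_K = ∫ [K^{(ρ₃)}]² / ∫ [K^{(ρ₂)}]² satisfies b_K ≤ 1, provided ∫ [K^{(ρ₂)}]² > 0. -/
open MeasureTheory

namespace BKAux
variable {d : ℕ}

noncomputable def D (v : EuclideanSpace ℝ (Fin d)) (f : EuclideanSpace ℝ (Fin d) → ℝ) :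
    EuclideanSpace ℝ (Fin d) → ℝ := fun x => fderiv ℝ f x v

lemma partialDeriv_eq (i : Fin d) (f : EuclideanSpace ℝ (Fin d) → ℝ) :
    partialDeriv d i f = D (EuclideanSpace.single i 1) f := rfl

lemma contDiff_D {m : ℕ} (v : EuclideanSpace ℝ (Fin d)) {f : EuclideanSpace ℝ (Fin d) → ℝ}
    (hf : ContDiff ℝ (m + 1 : ℕ) f) : ContDiff ℝ (m : ℕ) (D v f) := by
  have h1 : ContDiff ℝ (m : ℕ) (fderiv ℝ f) := hf.fderiv_right (by norm_num)
  exact h1.clm_apply contDiff_const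

lemma hcs_D (v : EuclideanSpace ℝ (Fin d)) {f : EuclideanSpace ℝ (Fin d) → ℝ}
    (hf : HasCompactSupport f) : HasCompactSupport (D v f) := by
  have := hf.fderiv (𝕜 := ℝ)
  exact this.comp_left (g := fun L : EuclideanSpace ℝ (Fin d) →L[ℝ] ℝ => L v) (by simp)

/-- Clairaut: swap two directional derivatives of a `C²` function. -/
lemma D_swap {f : EuclideanSpace ℝ (Fin d) → ℝ} (hf : ContDiff ℝ 2 f)
    (v w : EuclideanSpace ℝ (Fin d)) : D v (D w f) = D w (D v f) := by
  funext x
  have hdiff : DifferentiableAt ℝ (fderiv ℝ f) x := by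
    have : ContDiff ℝ (1 : ℕ) (fderiv ℝ f) := hf.fderiv_right (by norm_num)
    exact this.differentiable (by norm_num) x
  have key : ∀ u : EuclideanSpace ℝ (Fin d),
      fderiv ℝ (fun y => fderiv ℝ f y u) x = (fderiv ℝ (fderiv ℝ f) x).flip u := by
    intro u
    have := fderiv_clm_apply (c := fderiv ℝ f) (u := fun _ => u) hdiff
      (differentiableAt_const u)
    simpa using this
  have hsymm : IsSymmSndFDerivAt ℝ f x :=
    hf.contDiffAt.isSymmSndFDerivAt (by norm_num)
  show fderiv ℝ (fun y => fderiv ℝ f y w) x v = fderiv ℝ (fun y => fderiv ℝ f y v) x w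
  rw [key w, key v]
  simpa using hsymm v w

/-- Chain rule for a linear isometry equivalence. -/
lemma D_comp (R : EuclideanSpace ℝ (Fin d) ≃ₗᵢ[ℝ] EuclideanSpace ℝ (Fin d))
    {f : EuclideanSpace ℝ (Fin d) → ℝ} (hf : Differentiable ℝ f)
    (v : EuclideanSpace ℝ (Fin d)) (x : EuclideanSpace ℝ (Fin d)) :
    D v (fun y => f (R y)) x = D (R v) f (R x) := by
  have hR : HasFDerivAt (⇑R) (R.toContinuousLinearEquiv : EuclideanSpace ℝ (Fin d) →L[ℝ]
      EuclideanSpace ℝ (Fin d)) x := R.toContinuousLinearEquiv.hasFDerivAt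
  have h := ((hf (R x)).hasFDerivAt.comp x hR).fderiv
  show fderiv ℝ (fun y => f (R y)) x v = _
  rw [show (fun y => f (R y)) = f ∘ ⇑R from rfl, h]
  rfl

/-- Invariance of third directional derivatives under an isometry fixing `K`. -/
lemma D3_comp (R : EuclideanSpace ℝ (Fin d) ≃ₗᵢ[ℝ] EuclideanSpace ℝ (Fin d))
    {K : EuclideanSpace ℝ (Fin d) → ℝ} (hK : ContDiff ℝ 3 K)
    (hinv : ∀ x, K (R x) = K x) (u v w : EuclideanSpace ℝ (Fin d))
    (x : EuclideanSpace ℝ (Fin d)) :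
    D u (D v (D w K)) x = D (R u) (D (R v) (D (R w) K)) (R x) := by
  have hK3 : ContDiff ℝ (2 + 1 : ℕ) K := by exact_mod_cast hK
  have hKd : Differentiable ℝ K := hK3.differentiable (by norm_num)
  have h2 : ContDiff ℝ (1 + 1 : ℕ) (D (R w) K) := contDiff_D _ hK3
  have h2d : Differentiable ℝ (D (R w) K) := h2.differentiable (by norm_num)
  have h1 : ContDiff ℝ (1 : ℕ) (D (R v) (D (R w) K)) := contDiff_D _ h2
  have h1d : Differentiable ℝ (D (R v) (D (R w) K)) := h1.differentiable (by norm_num)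
  have step1 : D w K = fun y => D (R w) K (R y) := by
    funext y
    have hKR : K = fun z => K (R z) := by funext z; rw [hinv]
    conv_lhs => rw [hKR]
    exact D_comp R hKd w y
  have step2 : D v (D w K) = fun y => D (R v) (D (R w) K) (R y) := by
    funext y
    rw [step1]
    exact D_comp R h2d v y
  calc D u (D v (D w K)) x = D u (fun y => D (R v) (D (R w) K) (R y)) x := by rw [step2]
    _ = D (R u) (D (R v) (D (R w) K)) (R x) := D_comp R h1d u x

/-- Linearity in the direction. -/
lemma D_dir_comb (a b : ℝ) (u w : EuclideanSpace ℝ (Fin d))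
    (f : EuclideanSpace ℝ (Fin d) → ℝ) (x : EuclideanSpace ℝ (Fin d)) :
    D (a • u + b • w) f x = a * D u f x + b * D w f x := by
  simp [D, _root_.map_smul]

/-- Derivative of a linear combination of two differentiable functions. -/
lemma D_fun_comb {A B : EuclideanSpace ℝ (Fin d) → ℝ} (hA : Differentiable ℝ A)
    (hB : Differentiable ℝ B) (a b : ℝ) (v x : EuclideanSpace ℝ (Fin d)) :
    D v (fun y => a * A y + b * B y) x = a * D v A x + b * D v B x := by
  have h := (((hA x).hasFDerivAt.const_mul a).add ((hB x).hasFDerivAt.const_mul b)).fderiv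
  show fderiv ℝ (fun y => a * A y + b * B y) x v = _
  rw [show (fun y => a * A y + b * B y) = (fun y => a * A y) + fun y => b * B y from rfl, h]
  simp [D]

noncomputable def rotFun (i0 i2 : Fin d) (x : EuclideanSpace ℝ (Fin d)) :
    EuclideanSpace ℝ (Fin d) :=
  WithLp.toLp 2 fun i => if i = i0 then (Real.sqrt 2)⁻¹ * (x i0 + x i2)
    else if i = i2 then (Real.sqrt 2)⁻¹ * (x i2 - x i0) else x i

noncomputable def rotInv (i0 i2 : Fin d) (x : EuclideanSpace ℝ (Fin d)) :
    EuclideanSpace ℝ (Fin d) :=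
  WithLp.toLp 2 fun i => if i = i0 then (Real.sqrt 2)⁻¹ * (x i0 - x i2)
    else if i = i2 then (Real.sqrt 2)⁻¹ * (x i0 + x i2) else x i

lemma sq_inv_sqrt2 : ((Real.sqrt 2)⁻¹ : ℝ) * (Real.sqrt 2)⁻¹ = 1/2 := by
  rw [← mul_inv, Real.mul_self_sqrt (by norm_num : (0:ℝ) ≤ 2)]
  norm_num

noncomputable def rotLE (i0 i2 : Fin d) (hne : i0 ≠ i2) :
    EuclideanSpace ℝ (Fin d) ≃ₗ[ℝ] EuclideanSpace ℝ (Fin d) where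
  toFun := rotFun i0 i2
  invFun := rotInv i0 i2
  map_add' x y := by
    ext i
    by_cases h0 : i = i0 <;> by_cases h2 : i = i2 <;>
      simp [rotFun, h0, h2, hne, hne.symm, PiLp.add_apply] <;> ring
  map_smul' a x := by
    ext i
    by_cases h0 : i = i0 <;> by_cases h2 : i = i2 <;>
      simp [rotFun, h0, h2, hne, hne.symm, PiLp.smul_apply, smul_eq_mul] <;> ring
  left_inv x := by
    ext i
    by_cases h0 : i = i0
    · subst h0
      simp [rotFun, rotInv, hne, hne.symm]
      linear_combination (2 * x i) * sq_inv_sqrt2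
    · by_cases h2 : i = i2
      · subst h2
        simp [rotFun, rotInv, h0, hne, hne.symm]
        linear_combination (2 * x i) * sq_inv_sqrt2
      · simp [rotFun, rotInv, h0, h2]
  right_inv x := by
    ext i
    by_cases h0 : i = i0
    · subst h0
      simp [rotFun, rotInv, hne, hne.symm]
      linear_combination (2 * x i) * sq_inv_sqrt2
    · by_cases h2 : i = i2
      · subst h2
        simp [rotFun, rotInv, h0, hne, hne.symm]
        linear_combination (2 * x i) * sq_inv_sqrt2
      · simp [rotFun, rotInv, h0, h2]

lemma norm_rotFun (i0 i2 : Fin d) (hne : i0 ≠ i2) (x : EuclideanSpace ℝ (Fin d)) :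
    ‖rotFun i0 i2 x‖ = ‖x‖ := by
  rw [EuclideanSpace.norm_eq, EuclideanSpace.norm_eq]
  congr 1
  rw [← Finset.add_sum_erase _ _ (Finset.mem_univ i0),
      ← Finset.add_sum_erase _ _ (Finset.mem_univ i0)]
  have hmem : i2 ∈ Finset.univ.erase i0 := Finset.mem_erase.2 ⟨hne.symm, Finset.mem_univ _⟩
  rw [← Finset.add_sum_erase _ _ hmem, ← Finset.add_sum_erase _ _ hmem]
  have hsum : ∀ i ∈ (Finset.univ.erase i0).erase i2,
      ‖rotFun i0 i2 x i‖ ^ 2 = ‖x i‖ ^ 2 := by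
    intro i hi
    rcases Finset.mem_erase.1 hi with ⟨h2, hi'⟩
    rcases Finset.mem_erase.1 hi' with ⟨h0, _⟩
    simp [rotFun, h0, h2]
  rw [Finset.sum_congr rfl hsum]
  have e0 : rotFun i0 i2 x i0 = (Real.sqrt 2)⁻¹ * (x i0 + x i2) := by simp [rotFun]
  have e2 : rotFun i0 i2 x i2 = (Real.sqrt 2)⁻¹ * (x i2 - x i0) := by
    simp [rotFun, hne.symm]
  rw [e0, e2]
  simp only [Real.norm_eq_abs, sq_abs]
  linear_combination (2 * (x i0 ^ 2 + x i2 ^ 2)) * sq_inv_sqrt2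

noncomputable def rot45 (i0 i2 : Fin d) (hne : i0 ≠ i2) :
    EuclideanSpace ℝ (Fin d) ≃ₗᵢ[ℝ] EuclideanSpace ℝ (Fin d) :=
  ⟨rotLE i0 i2 hne, fun x => norm_rotFun i0 i2 hne x⟩

lemma rot45_apply (i0 i2 : Fin d) (hne : i0 ≠ i2) (x : EuclideanSpace ℝ (Fin d)) :
    rot45 i0 i2 hne x = rotFun i0 i2 x := rfl

lemma rot45_single_left (i0 i2 : Fin d) (hne : i0 ≠ i2) :
    rot45 i0 i2 hne (EuclideanSpace.single i0 1) =
      (Real.sqrt 2)⁻¹ • EuclideanSpace.single i0 1 +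
        (-(Real.sqrt 2)⁻¹) • EuclideanSpace.single i2 1 := by
  ext i
  by_cases h0 : i = i0 <;> by_cases h2 : i = i2 <;>
    simp [rot45_apply, rotFun, EuclideanSpace.single_apply, h0, h2, hne, hne.symm,
      PiLp.add_apply, PiLp.smul_apply, smul_eq_mul]

lemma rot45_single_right (i0 i2 : Fin d) (hne : i0 ≠ i2) :
    rot45 i0 i2 hne (EuclideanSpace.single i2 1) =
      (Real.sqrt 2)⁻¹ • EuclideanSpace.single i0 1 +
        (Real.sqrt 2)⁻¹ • EuclideanSpace.single i2 1 := by
  ext i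
  by_cases h0 : i = i0 <;> by_cases h2 : i = i2 <;>
    simp [rot45_apply, rotFun, EuclideanSpace.single_apply, h0, h2, hne, hne.symm,
      PiLp.add_apply, PiLp.smul_apply, smul_eq_mul]

lemma rot45_single_other (i0 i2 j : Fin d) (hne : i0 ≠ i2) (hj0 : j ≠ i0) (hj2 : j ≠ i2) :
    rot45 i0 i2 hne (EuclideanSpace.single j 1) = EuclideanSpace.single j 1 := by
  ext i
  by_cases h0 : i = i0 <;> by_cases h2 : i = i2 <;>
    simp [rot45_apply, rotFun, EuclideanSpace.single_apply, h0, h2, hne, hne.symm,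
      hj0, hj0.symm, hj2, hj2.symm]

/-- Swap of two coordinates as a linear isometry equivalence. -/
noncomputable def swapIso (i0 i2 : Fin d) :
    EuclideanSpace ℝ (Fin d) ≃ₗᵢ[ℝ] EuclideanSpace ℝ (Fin d) :=
  LinearIsometryEquiv.piLpCongrLeft 2 ℝ ℝ (Equiv.swap i0 i2)

lemma swapIso_apply (i0 i2 : Fin d) (x : EuclideanSpace ℝ (Fin d)) (i : Fin d) :
    swapIso i0 i2 x i = x (Equiv.swap i0 i2 i) := by
  simp [swapIso, LinearIsometryEquiv.piLpCongrLeft_apply, Equiv.piCongrLeft'_apply,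
    Equiv.symm_swap]

lemma swapIso_single (i0 i2 j k : Fin d) (h : Equiv.swap i0 i2 j = k) :
    swapIso i0 i2 (EuclideanSpace.single k 1) = EuclideanSpace.single j 1 := by
  ext i
  rw [swapIso_apply]
  simp only [EuclideanSpace.single_apply]
  by_cases hi : i = j
  · subst hi; rw [if_pos h, if_pos rfl]
  · have hne' : ¬ (Equiv.swap i0 i2 i = k) := by
      rw [← h]
      exact fun hc => hi ((Equiv.swap i0 i2).injective hc)
    rw [if_neg hne', if_neg hi]

lemma finRange_take_three (hd : 3 ≤ d) :
    (List.finRange d).take 3 = [⟨0, (by omega : d > 0)⟩, ⟨1, (by omega : d > 1)⟩,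
        ⟨2, (by omega : d > 2)⟩] := by
  apply List.ext_getElem
  · simp [Nat.min_eq_left hd]
  · intro i h1 h2
    simp only [List.getElem_take, List.getElem_finRange]
    simp at h2
    interval_cases i <;> rfl

lemma mem_drop_three (i : Fin d) (hi : i ∈ (List.finRange d).drop 3) :
    3 ≤ i.val := by
  rw [List.mem_iff_getElem] at hi
  obtain ⟨k, hk, hik⟩ := hi
  rw [List.getElem_drop] at hik
  rw [← hik]
  simp

lemma multiIndexList_eq (hd : 3 ≤ d) (α : Fin d → ℕ)
    (hz : ∀ i : Fin d, 3 ≤ i.val → α i = 0) :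
    multiIndexList d α =
      List.replicate (α ⟨0, (by omega : d > 0)⟩) ⟨0, (by omega : d > 0)⟩ ++
      List.replicate (α ⟨1, (by omega : d > 1)⟩) ⟨1, (by omega : d > 1)⟩ ++
      List.replicate (α ⟨2, (by omega : d > 2)⟩) ⟨2, (by omega : d > 2)⟩ := by
  unfold multiIndexList
  rw [← List.take_append_drop 3 (List.finRange d), List.flatMap_append,
    finRange_take_three hd]
  have hnil : ((List.finRange d).drop 3).flatMap (fun i => List.replicate (α i) i) = [] := by
    rw [List.flatMap_eq_nil_iff]
    intro i hi
    rw [hz i (mem_drop_three i hi)]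
    rfl
  rw [hnil]
  simp [List.flatMap_cons]


lemma contDiff_D_of (n m : ℕ) (v : EuclideanSpace ℝ (Fin d)) {f : EuclideanSpace ℝ (Fin d) → ℝ}
    (hf : ContDiff ℝ (n : ℕ) f) (h : m + 1 ≤ n) : ContDiff ℝ (m : ℕ) (D v f) := by
  have h1 : ContDiff ℝ (m : ℕ) (fderiv ℝ f) := hf.fderiv_right (by exact_mod_cast h)
  exact h1.clm_apply contDiff_const

/-- The main pointwise identity: the (i0,i1,i2) third derivative of a kernel invariant
under the 45-degree rotation in the (i0,i2)-plane is half the difference of the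
(i0,i0,i1) and (i2,i2,i1) derivatives at the rotated point. -/
lemma key_pointwise (i0 i2 : Fin d) (hne : i0 ≠ i2) (i1 : Fin d) (h10 : i1 ≠ i0)
    (h12 : i1 ≠ i2) {K : EuclideanSpace ℝ (Fin d) → ℝ} (hK : ContDiff ℝ 3 K)
    (hinv : ∀ y, K (rot45 i0 i2 hne y) = K y) (x : EuclideanSpace ℝ (Fin d)) :
    D (EuclideanSpace.single i0 1) (D (EuclideanSpace.single i1 1)
        (D (EuclideanSpace.single i2 1) K)) x
      = 2⁻¹ * (D (EuclideanSpace.single i0 1) (D (EuclideanSpace.single i0 1)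
            (D (EuclideanSpace.single i1 1) K)) (rot45 i0 i2 hne x)
          - D (EuclideanSpace.single i2 1) (D (EuclideanSpace.single i2 1)
            (D (EuclideanSpace.single i1 1) K)) (rot45 i0 i2 hne x)) := by
  have hK3 : ContDiff ℝ (3 : ℕ) K := by exact_mod_cast hK
  have hK2 : ContDiff ℝ 2 K := hK.of_le (by norm_num)
  set e0 := EuclideanSpace.single i0 (1:ℝ) with he0
  set e1 := EuclideanSpace.single i1 (1:ℝ) with he1
  set e2 := EuclideanSpace.single i2 (1:ℝ) with he2
  have hL2 : ContDiff ℝ (2 : ℕ) (D e1 K) := contDiff_D_of 3 2 e1 hK3 (by norm_num)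
  have hL2' : ContDiff ℝ 2 (D e1 K) := by exact_mod_cast hL2
  have hA : Differentiable ℝ (D e0 (D e1 K)) :=
    (contDiff_D_of 2 1 e0 hL2 (by norm_num)).differentiable (by norm_num)
  have hB : Differentiable ℝ (D e2 (D e1 K)) :=
    (contDiff_D_of 2 1 e2 hL2 (by norm_num)).differentiable (by norm_num)
  rw [D_swap hK2 e1 e2]
  rw [D3_comp (rot45 i0 i2 hne) hK hinv e0 e2 e1 x]
  rw [show rot45 i0 i2 hne e1 = e1 from rot45_single_other i0 i2 i1 hne h10 h12,
    show rot45 i0 i2 hne e0 = (Real.sqrt 2)⁻¹ • e0 + (-(Real.sqrt 2)⁻¹) • e2 from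
      rot45_single_left i0 i2 hne,
    show rot45 i0 i2 hne e2 = (Real.sqrt 2)⁻¹ • e0 + (Real.sqrt 2)⁻¹ • e2 from
      rot45_single_right i0 i2 hne]
  rw [show D ((Real.sqrt 2)⁻¹ • e0 + (Real.sqrt 2)⁻¹ • e2) (D e1 K)
      = fun y => (Real.sqrt 2)⁻¹ * D e0 (D e1 K) y + (Real.sqrt 2)⁻¹ * D e2 (D e1 K) y from
    funext fun y => D_dir_comb _ _ e0 e2 (D e1 K) y]
  rw [D_dir_comb ((Real.sqrt 2)⁻¹) (-(Real.sqrt 2)⁻¹) e0 e2 _ (rot45 i0 i2 hne x)]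
  rw [D_fun_comb hA hB _ _ e0 (rot45 i0 i2 hne x), D_fun_comb hA hB _ _ e2 (rot45 i0 i2 hne x)]
  rw [show D e0 (D e2 (D e1 K)) = D e2 (D e0 (D e1 K)) from D_swap hL2' e0 e2]
  linear_combination (D e0 (D e0 (D e1 K)) (rot45 i0 i2 hne x)
    - D e2 (D e2 (D e1 K)) (rot45 i0 i2 hne x)) * sq_inv_sqrt2

/-- Under the coordinate swap `i0 ↔ i2`, the `(i2,i2,i1)` derivative becomes the
`(i0,i0,i1)` derivative. -/
lemma key_swap (i0 i2 i1 : Fin d) (h10 : i1 ≠ i0) (h12 : i1 ≠ i2)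
    {K : EuclideanSpace ℝ (Fin d) → ℝ} (hK : ContDiff ℝ 3 K)
    (hinv : ∀ y, K (swapIso i0 i2 y) = K y) (x : EuclideanSpace ℝ (Fin d)) :
    D (EuclideanSpace.single i2 1) (D (EuclideanSpace.single i2 1)
        (D (EuclideanSpace.single i1 1) K)) x
      = D (EuclideanSpace.single i0 1) (D (EuclideanSpace.single i0 1)
        (D (EuclideanSpace.single i1 1) K)) (swapIso i0 i2 x) := by
  rw [D3_comp (swapIso i0 i2) hK hinv _ _ _ x]
  rw [swapIso_single i0 i2 i0 i2 (by simp), swapIso_single i0 i2 i1 i1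
    (Equiv.swap_apply_of_ne_of_ne h10 h12)]


end BKAux

/-- For `d ≥ 3` and a spherically symmetric `C³` compactly supported kernel `K`,
with `ρ₂ = (2,1,0,…,0)` and `ρ₃ = (1,1,1,0,…,0)`, the ratio
`b_K = ∫ [K^{(ρ₃)}]² / ∫ [K^{(ρ₂)}]²` satisfies `b_K ≤ 1`. -/
theorem bK_le_one (d : ℕ) (hd : 3 ≤ d)
    (K : EuclideanSpace ℝ (Fin d) → ℝ)
    (hsym : ∀ x y : EuclideanSpace ℝ (Fin d), ‖x‖ = ‖y‖ → K x = K y)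
    (hK : ContDiff ℝ 3 K) (hsupp : HasCompactSupport K)
    (ρ₂ ρ₃ : Fin d → ℕ)
    (hρ₂ : ρ₂ = fun i => if i = (⟨0, by omega⟩ : Fin d) then 2
      else if i = (⟨1, by omega⟩ : Fin d) then 1 else 0)
    (hρ₃ : ρ₃ = fun i => if i = (⟨0, by omega⟩ : Fin d) then 1
      else if i = (⟨1, by omega⟩ : Fin d) then 1
      else if i = (⟨2, by omega⟩ : Fin d) then 1 else 0)
    (hpos : 0 < ∫ u, (mderiv d ρ₂ K u) ^ 2) :
    (∫ u, (mderiv d ρ₃ K u) ^ 2) / (∫ u, (mderiv d ρ₂ K u) ^ 2) ≤ 1 := by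
  classical
  have hne02 : (⟨0, by omega⟩ : Fin d) ≠ ⟨2, by omega⟩ := by simp [Fin.ext_iff]
  have h10 : (⟨1, by omega⟩ : Fin d) ≠ ⟨0, by omega⟩ := by simp [Fin.ext_iff]
  have h12 : (⟨1, by omega⟩ : Fin d) ≠ ⟨2, by omega⟩ := by simp [Fin.ext_iff]
  have hz2 : ∀ i : Fin d, 3 ≤ i.val → ρ₂ i = 0 := by
    intro i hi
    rw [hρ₂]
    have h0 : i ≠ (⟨0, by omega⟩ : Fin d) := Fin.ne_of_val_ne (show i.val ≠ 0 by omega)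
    have h1 : i ≠ (⟨1, by omega⟩ : Fin d) := Fin.ne_of_val_ne (show i.val ≠ 1 by omega)
    simp [h0, h1]
  have hz3 : ∀ i : Fin d, 3 ≤ i.val → ρ₃ i = 0 := by
    intro i hi
    rw [hρ₃]
    have h0 : i ≠ (⟨0, by omega⟩ : Fin d) := Fin.ne_of_val_ne (show i.val ≠ 0 by omega)
    have h1 : i ≠ (⟨1, by omega⟩ : Fin d) := Fin.ne_of_val_ne (show i.val ≠ 1 by omega)
    have h2 : i ≠ (⟨2, by omega⟩ : Fin d) := Fin.ne_of_val_ne (show i.val ≠ 2 by omega)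
    simp [h0, h1, h2]
  have hl2 : multiIndexList d ρ₂ =
      [(⟨0, by omega⟩ : Fin d), ⟨0, by omega⟩, ⟨1, by omega⟩] := by
    rw [BKAux.multiIndexList_eq hd ρ₂ hz2, hρ₂]
    norm_num [Fin.ext_iff, List.replicate]
  have hl3 : multiIndexList d ρ₃ =
      [(⟨0, by omega⟩ : Fin d), ⟨1, by omega⟩, ⟨2, by omega⟩] := by
    rw [BKAux.multiIndexList_eq hd ρ₃ hz3, hρ₃]
    norm_num [Fin.ext_iff, List.replicate]
  have hm2 : mderiv d ρ₂ K =
      BKAux.D (EuclideanSpace.single (⟨0, by omega⟩ : Fin d) 1)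
        (BKAux.D (EuclideanSpace.single (⟨0, by omega⟩ : Fin d) 1)
          (BKAux.D (EuclideanSpace.single (⟨1, by omega⟩ : Fin d) 1) K)) := by
    unfold mderiv
    rw [hl2]
    rfl
  have hm3 : mderiv d ρ₃ K =
      BKAux.D (EuclideanSpace.single (⟨0, by omega⟩ : Fin d) 1)
        (BKAux.D (EuclideanSpace.single (⟨1, by omega⟩ : Fin d) 1)
          (BKAux.D (EuclideanSpace.single (⟨2, by omega⟩ : Fin d) 1) K)) := by
    unfold mderiv
    rw [hl3]
    rfl
  set R := BKAux.rot45 (⟨0, by omega⟩ : Fin d) ⟨2, by omega⟩ hne02 with hRdef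
  set S := BKAux.swapIso (⟨0, by omega⟩ : Fin d) (⟨2, by omega⟩ : Fin d) with hSdef
  have hinvR : ∀ y, K (R y) = K y := fun y => hsym _ _ (R.norm_map y)
  have hinvS : ∀ y, K (S y) = K y := fun y => hsym _ _ (S.norm_map y)
  set F := BKAux.D (EuclideanSpace.single (⟨0, by omega⟩ : Fin d) 1)
    (BKAux.D (EuclideanSpace.single (⟨0, by omega⟩ : Fin d) 1)
      (BKAux.D (EuclideanSpace.single (⟨1, by omega⟩ : Fin d) 1) K)) with hFdef
  set G := BKAux.D (EuclideanSpace.single (⟨2, by omega⟩ : Fin d) 1)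
    (BKAux.D (EuclideanSpace.single (⟨2, by omega⟩ : Fin d) 1)
      (BKAux.D (EuclideanSpace.single (⟨1, by omega⟩ : Fin d) 1) K)) with hGdef
  set H := BKAux.D (EuclideanSpace.single (⟨0, by omega⟩ : Fin d) 1)
    (BKAux.D (EuclideanSpace.single (⟨1, by omega⟩ : Fin d) 1)
      (BKAux.D (EuclideanSpace.single (⟨2, by omega⟩ : Fin d) 1) K)) with hHdef
  have hK3 : ContDiff ℝ (3 : ℕ) K := by exact_mod_cast hK
  have hFcont : Continuous F :=
    (BKAux.contDiff_D_of 1 0 _ (BKAux.contDiff_D_of 2 1 _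
      (BKAux.contDiff_D_of 3 2 _ hK3 (by norm_num)) (by norm_num)) (by norm_num)).continuous
  have hGcont : Continuous G :=
    (BKAux.contDiff_D_of 1 0 _ (BKAux.contDiff_D_of 2 1 _
      (BKAux.contDiff_D_of 3 2 _ hK3 (by norm_num)) (by norm_num)) (by norm_num)).continuous
  have hFcs : HasCompactSupport F := BKAux.hcs_D _ (BKAux.hcs_D _ (BKAux.hcs_D _ hsupp))
  have hGcs : HasCompactSupport G := BKAux.hcs_D _ (BKAux.hcs_D _ (BKAux.hcs_D _ hsupp))
  have hF2int : Integrable (fun y => F y ^ 2) := by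
    apply Continuous.integrable_of_hasCompactSupport (hFcont.pow 2)
    rw [sq]; exact hFcs.mul_left
  have hG2int : Integrable (fun y => G y ^ 2) := by
    apply Continuous.integrable_of_hasCompactSupport (hGcont.pow 2)
    rw [sq]; exact hGcs.mul_left
  have hphiint : Integrable (fun y => (2⁻¹ * (F y - G y)) ^ 2) := by
    apply Continuous.integrable_of_hasCompactSupport
      ((continuous_const.mul (hFcont.sub hGcont)).pow 2)
    apply HasCompactSupport.intro (hFcs.union hGcs)
    intro x hx
    simp only [Set.mem_union, not_or] at hx
    simp only [Pi.pow_apply, Pi.mul_apply, Pi.sub_apply]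
    rw [image_eq_zero_of_notMem_tsupport hx.1, image_eq_zero_of_notMem_tsupport hx.2]
    norm_num
  have hsumint : Integrable (fun y => (F y ^ 2 + G y ^ 2) / 2) :=
    (hF2int.add hG2int).div_const 2
  have hIg : ∫ u, G u ^ 2 = ∫ u, F u ^ 2 := by
    have hkey : ∀ x, G x = F (S x) := fun x =>
      BKAux.key_swap _ _ _ h10 h12 hK hinvS x
    calc ∫ u, G u ^ 2 = ∫ u, (fun y => F y ^ 2) (S u) := by simp only [hkey]
      _ = ∫ y, F y ^ 2 := S.measurePreserving.integral_comp
          S.toHomeomorph.toMeasurableEquiv.measurableEmbedding (fun y => F y ^ 2)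
  have hIh : ∫ u, H u ^ 2 = ∫ y, (2⁻¹ * (F y - G y)) ^ 2 := by
    have hkey : ∀ x, H x = 2⁻¹ * (F (R x) - G (R x)) := fun x =>
      BKAux.key_pointwise _ _ hne02 _ h10 h12 hK hinvR x
    calc ∫ u, H u ^ 2 = ∫ u, (fun y => (2⁻¹ * (F y - G y)) ^ 2) (R u) := by
          simp only [hkey]
      _ = ∫ y, (2⁻¹ * (F y - G y)) ^ 2 := R.measurePreserving.integral_comp
          R.toHomeomorph.toMeasurableEquiv.measurableEmbedding
          (fun y => (2⁻¹ * (F y - G y)) ^ 2)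
  have hbound : ∫ u, H u ^ 2 ≤ ∫ u, F u ^ 2 := by
    rw [hIh]
    have h1 : ∫ y, (2⁻¹ * (F y - G y)) ^ 2 ≤ ∫ y, (F y ^ 2 + G y ^ 2) / 2 :=
      integral_mono hphiint hsumint (fun y => by nlinarith [sq_nonneg (F y + G y)])
    have h2 : ∫ y, (F y ^ 2 + G y ^ 2) / 2 = ((∫ y, F y ^ 2) + ∫ y, G y ^ 2) / 2 := by
      rw [integral_div, integral_add hF2int hG2int]
    rw [h2, hIg] at h1
    linarith
  rw [hm2] at hpos
  rw [hm2, hm3]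
  rw [div_le_one hpos]
  exact hbound
end

section
/- Let A and B be n×n positive semidefinite real matrices and let S = A − B. Then ‖A^{1/2} − B^{1/2}‖_F ≤ ‖S‖_F / (λ_min(A)^{1/2} + λ_min(B)^{1/2}), provided λ_min(A)^{1/2} + λ_min(B)^{1/2} > 0. -/
/-- Frobenius norm of a real matrix. -/
noncomputable def frobNorm {n : ℕ} (A : Matrix (Fin n) (Fin n) ℝ) : ℝ :=
  Real.sqrt (∑ i, ∑ j, (A i j) ^ 2)

/-- The smallest eigenvalue of a Hermitian real matrix. -/
noncomputable def eigMin {n : ℕ} (A : Matrix (Fin n) (Fin n) ℝ)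
    (hA : A.IsHermitian) : ℝ :=
  ⨅ i, hA.eigenvalues i

section

open scoped ComplexOrder

/-- The positive semidefinite square root of a positive semidefinite matrix
(the definition `Matrix.PosSemidef.sqrt` of the older Mathlib, since removed). -/
noncomputable def Matrix.PosSemidef.sqrt {n : Type*} [Fintype n] [DecidableEq n]
    {𝕜 : Type*} [RCLike 𝕜] {A : Matrix n n 𝕜} (hA : A.PosSemidef) : Matrix n n 𝕜 :=
  hA.1.eigenvectorUnitary.1 * Matrix.diagonal ((↑) ∘ (√·) ∘ hA.1.eigenvalues) *
  (star hA.1.eigenvectorUnitary : Matrix n n 𝕜)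

end

open Matrix

variable {n : ℕ}

lemma herm_transpose {M : Matrix (Fin n) (Fin n) ℝ} (h : M.IsHermitian) : Mᵀ = M := by
  have := h
  unfold Matrix.IsHermitian at this
  simpa [Matrix.conjTranspose_eq_transpose_of_trivial] using this

lemma Matrix.PosSemidef.posSemidef_sqrt {A : Matrix (Fin n) (Fin n) ℝ} (hA : A.PosSemidef) :
    hA.sqrt.PosSemidef := by
  unfold Matrix.PosSemidef.sqrt
  rw [Matrix.star_eq_conjTranspose]
  apply Matrix.PosSemidef.mul_mul_conjTranspose_same
  exact Matrix.posSemidef_diagonal_iff.mpr fun i => by simp [Real.sqrt_nonneg]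

lemma Matrix.PosSemidef.sqrt_mul_self {A : Matrix (Fin n) (Fin n) ℝ} (hA : A.PosSemidef) :
    hA.sqrt * hA.sqrt = A := by
  have hspec := hA.1.spectral_theorem
  rw [Unitary.conjStarAlgAut_apply] at hspec
  have hUU := Unitary.coe_star_mul_self hA.1.eigenvectorUnitary
  have hDD : Matrix.diagonal ((RCLike.ofReal : ℝ → ℝ) ∘ (√·) ∘ hA.1.eigenvalues) *
      Matrix.diagonal ((RCLike.ofReal : ℝ → ℝ) ∘ (√·) ∘ hA.1.eigenvalues) =
      Matrix.diagonal (RCLike.ofReal ∘ hA.1.eigenvalues) := by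
    rw [Matrix.diagonal_mul_diagonal]
    congr 1
    funext i
    simp [Real.mul_self_sqrt (hA.eigenvalues_nonneg i)]
  unfold Matrix.PosSemidef.sqrt
  conv_rhs => rw [hspec]
  calc _ = (hA.1.eigenvectorUnitary.1 : Matrix (Fin n) (Fin n) ℝ) *
        (Matrix.diagonal ((RCLike.ofReal : ℝ → ℝ) ∘ (√·) ∘ hA.1.eigenvalues) *
        ((star hA.1.eigenvectorUnitary : Matrix (Fin n) (Fin n) ℝ) * hA.1.eigenvectorUnitary.1) *
        Matrix.diagonal ((RCLike.ofReal : ℝ → ℝ) ∘ (√·) ∘ hA.1.eigenvalues)) *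
        (star hA.1.eigenvectorUnitary : Matrix (Fin n) (Fin n) ℝ) := by
        simp only [Matrix.mul_assoc]
    _ = _ := by rw [hUU, Matrix.mul_one, hDD]

lemma trace_transpose_mul_self_nonneg (N : Matrix (Fin n) (Fin n) ℝ) :
    0 ≤ (Nᵀ * N).trace := by
  rw [Matrix.trace]
  apply Finset.sum_nonneg
  intro i _
  simp only [Matrix.diag_apply, Matrix.mul_apply, Matrix.transpose_apply]
  apply Finset.sum_nonneg
  intro j _
  exact mul_self_nonneg _

lemma sub_smul_one_posSemidef {M : Matrix (Fin n) (Fin n) ℝ} (hM : M.IsHermitian)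
    {c : ℝ} (hc : ∀ i, c ≤ hM.eigenvalues i) : (M - c • 1).PosSemidef := by
  classical
  set U : Matrix (Fin n) (Fin n) ℝ := (hM.eigenvectorUnitary : Matrix (Fin n) (Fin n) ℝ)
  have hUU : U * star U = 1 := (Matrix.mem_unitaryGroup_iff).mp hM.eigenvectorUnitary.2
  have hspec := hM.spectral_theorem
  rw [Unitary.conjStarAlgAut_apply] at hspec
  have key : M - c • 1 = U * (Matrix.diagonal (fun i => hM.eigenvalues i - c)) * star U := by
    have hD : Matrix.diagonal (fun i => hM.eigenvalues i - c) =
        Matrix.diagonal (RCLike.ofReal ∘ hM.eigenvalues) - c • 1 := by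
      ext i j
      by_cases hij : i = j <;> simp [Matrix.diagonal, hij, Matrix.one_apply]
    rw [hD, Matrix.mul_sub, Matrix.sub_mul, Matrix.mul_smul, Matrix.mul_one,
      Matrix.smul_mul, hUU, ← hspec]
  rw [key]
  apply Matrix.PosSemidef.mul_mul_conjTranspose_same
  exact Matrix.posSemidef_diagonal_iff.mpr fun i => sub_nonneg.mpr (hc i)


lemma sqrt_lower (hn : 0 < n) {A : Matrix (Fin n) (Fin n) ℝ} (hA : A.PosSemidef) :
    (hA.sqrt - Real.sqrt (eigMin A hA.1) • 1).PosSemidef := by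
  haveI : Nonempty (Fin n) := ⟨⟨0, hn⟩⟩
  set c := eigMin A hA.1 with hc
  set X := hA.sqrt with hXdef
  have hX : X.PosSemidef := hA.posSemidef_sqrt
  have hXX : X * X = A := hA.sqrt_mul_self
  have hAc : (A - c • 1).PosSemidef := by
    apply sub_smul_one_posSemidef hA.1
    intro i
    exact ciInf_le (Set.Finite.bddBelow (Set.finite_range _)) i
  apply sub_smul_one_posSemidef hX.1
  intro j
  set μ := hX.1.eigenvalues j with hμ
  set v : Fin n → ℝ := ⇑(hX.1.eigenvectorBasis j) with hv
  have hvX : X *ᵥ v = μ • v := hX.1.mulVec_eigenvectorBasis j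
  have hvne : v ≠ 0 := by
    have h0 := hX.1.eigenvectorBasis.orthonormal.ne_zero j
    intro h
    apply h0
    ext i
    exact congrFun h i
  have hAv : A *ᵥ v = (μ ^ 2) • v := by
    rw [← hXX, ← Matrix.mulVec_mulVec, hvX, Matrix.mulVec_smul, hvX, smul_smul, ← pow_two]
  have hsub : (A - c • 1) *ᵥ v = (μ ^ 2 - c) • v := by
    rw [Matrix.sub_mulVec, hAv, Matrix.smul_mulVec, Matrix.one_mulVec, sub_smul]
  have hq := hAc.dotProduct_mulVec_nonneg v
  rw [hsub] at hq
  have hq' : 0 ≤ (μ ^ 2 - c) * (v ⬝ᵥ v) := by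
    simpa [dotProduct_smul, star_trivial] using hq
  have hvv : 0 < v ⬝ᵥ v := by
    obtain ⟨i, hi⟩ := Function.ne_iff.mp hvne
    rw [dotProduct]
    apply Finset.sum_pos' (fun i _ => mul_self_nonneg _)
    exact ⟨i, Finset.mem_univ _, mul_self_pos.mpr (by simpa using hi)⟩
  have hcle : c ≤ μ ^ 2 := by
    nlinarith
  have := Real.sqrt_le_sqrt hcle
  rwa [Real.sqrt_sq (hX.eigenvalues_nonneg j)] at this

lemma trace_conj_nonneg {n : ℕ} {M : Matrix (Fin n) (Fin n) ℝ} (hM : M.PosSemidef)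
    {D : Matrix (Fin n) (Fin n) ℝ} (hD : Dᵀ = D) : 0 ≤ (D * M * D).trace := by
  set R := hM.sqrt with hRdef
  have hR : R * R = M := hM.sqrt_mul_self
  have hRt : Rᵀ = R := herm_transpose hM.posSemidef_sqrt.1
  have key : D * M * D = (R * D)ᵀ * (R * D) := by
    rw [Matrix.transpose_mul, hRt, hD, ← hR]
    simp only [Matrix.mul_assoc]
  rw [key]
  exact trace_transpose_mul_self_nonneg _

set_option maxHeartbeats 1000000 in
/-- Perturbation bound for square roots of positive semidefinite matrices:
`‖A^{1/2} - B^{1/2}‖_F ≤ ‖A - B‖_F / (λ_min(A)^{1/2} + λ_min(B)^{1/2})`. -/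
theorem sqrt_perturbation_bound (n : ℕ) (A B : Matrix (Fin n) (Fin n) ℝ)
    (hA : A.PosSemidef) (hB : B.PosSemidef)
    (hpos : 0 < Real.sqrt (eigMin A hA.1) + Real.sqrt (eigMin B hB.1)) :
    frobNorm (hA.sqrt - hB.sqrt) ≤
      frobNorm (A - B) / (Real.sqrt (eigMin A hA.1) + Real.sqrt (eigMin B hB.1)) := by
  rcases Nat.eq_zero_or_pos n with hn | hn
  · subst hn
    simp [frobNorm]
  set a := Real.sqrt (eigMin A hA.1) with ha
  set b := Real.sqrt (eigMin B hB.1) with hb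
  set X := hA.sqrt with hXdef
  set Y := hB.sqrt with hYdef
  set Δ := X - Y with hΔdef
  set S := A - B with hSdef
  have hXh : Xᵀ = X := herm_transpose hA.posSemidef_sqrt.1
  have hYh : Yᵀ = Y := herm_transpose hB.posSemidef_sqrt.1
  have hΔt : Δᵀ = Δ := by rw [hΔdef, Matrix.transpose_sub, hXh, hYh]
  have hΔsymm : ∀ i j, Δ j i = Δ i j := fun i j => congrFun (congrFun hΔt i) j
  have hSt : ∀ i j, S j i = S i j := by
    have : Sᵀ = S := by
      rw [hSdef, Matrix.transpose_sub, herm_transpose hA.1, herm_transpose hB.1]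
    exact fun i j => congrFun (congrFun this i) j
  have hS : S = X * Δ + Δ * Y := by
    rw [hSdef, hΔdef, Matrix.mul_sub, Matrix.sub_mul, hXdef, hYdef,
      hA.sqrt_mul_self, hB.sqrt_mul_self]
    abel
  set t := ∑ i, ∑ j, (Δ i j) ^ 2 with htdef
  set s := ∑ i, ∑ j, (S i j) ^ 2 with hsdef
  have ht0 : 0 ≤ t := by positivity
  have hs0 : 0 ≤ s := by positivity
  have hXlow : (X - a • 1).PosSemidef := sqrt_lower hn hA
  have hYlow : (Y - b • 1).PosSemidef := sqrt_lower hn hB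
  clear_value Δ S X Y
  clear_value a b
  have htrΔΔ : (Δ * Δ).trace = t := by
    rw [htdef, Matrix.trace]
    simp only [Matrix.diag_apply, Matrix.mul_apply]
    refine Finset.sum_congr rfl fun i _ => Finset.sum_congr rfl fun j _ => ?_
    rw [hΔsymm i j, pow_two]
  -- lower bound for trace (Δ * X * Δ)
  have hXl : a * t ≤ (Δ * X * Δ).trace := by
    have h1 : 0 ≤ (Δ * (X - a • 1) * Δ).trace := trace_conj_nonneg hXlow hΔt
    have h2 : (Δ * (X - a • 1) * Δ).trace = (Δ * X * Δ).trace - a * t := by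
      rw [Matrix.mul_sub, Matrix.sub_mul, Matrix.trace_sub, Matrix.mul_smul,
        Matrix.mul_one, Matrix.smul_mul, Matrix.trace_smul, htrΔΔ, smul_eq_mul]
    linarith
  have hYl : b * t ≤ (Δ * Δ * Y).trace := by
    have h1 : 0 ≤ (Δ * (Y - b • 1) * Δ).trace := trace_conj_nonneg hYlow hΔt
    have h2 : (Δ * (Y - b • 1) * Δ).trace = (Δ * Δ * Y).trace - b * t := by
      rw [Matrix.mul_sub, Matrix.sub_mul, Matrix.trace_sub, Matrix.mul_smul,
        Matrix.mul_one, Matrix.smul_mul, Matrix.trace_smul, htrΔΔ, smul_eq_mul]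
      congr 1
      rw [Matrix.mul_assoc, Matrix.trace_mul_comm, Matrix.mul_assoc]
      exact Matrix.trace_mul_comm _ _
    linarith
  have hsplit : (Δ * S).trace = (Δ * X * Δ).trace + (Δ * Δ * Y).trace := by
    simp only [hS, Matrix.mul_add, Matrix.trace_add, Matrix.mul_assoc]
  have htrS : (Δ * S).trace = ∑ i, ∑ j, Δ i j * S i j := by
    rw [Matrix.trace]
    simp only [Matrix.diag_apply, Matrix.mul_apply]
    exact Finset.sum_congr rfl fun i _ => Finset.sum_congr rfl fun j _ => by rw [hSt i j]
  have hCS : ∑ i, ∑ j, Δ i j * S i j ≤ Real.sqrt t * Real.sqrt s := by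
    have h := Real.sum_mul_le_sqrt_mul_sqrt (Finset.univ : Finset (Fin n × Fin n))
      (fun p => Δ p.1 p.2) (fun p => S p.1 p.2)
    rwa [Fintype.sum_prod_type, Fintype.sum_prod_type, Fintype.sum_prod_type] at h
  have hkey : (a + b) * t ≤ Real.sqrt t * Real.sqrt s := by
    calc (a + b) * t = a * t + b * t := by ring
    _ ≤ (Δ * X * Δ).trace + (Δ * Δ * Y).trace := add_le_add hXl hYl
    _ = (Δ * S).trace := hsplit.symm
    _ = ∑ i, ∑ j, Δ i j * S i j := htrS
    _ ≤ Real.sqrt t * Real.sqrt s := hCS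
  show Real.sqrt t ≤ Real.sqrt s / (a + b)
  rw [le_div_iff₀ hpos]
  rcases eq_or_lt_of_le ht0 with ht | ht
  · rw [← ht, Real.sqrt_zero, zero_mul]
    exact Real.sqrt_nonneg _
  · have hst : 0 < Real.sqrt t := Real.sqrt_pos.mpr ht
    have hts : Real.sqrt t * Real.sqrt t = t := Real.mul_self_sqrt ht0
    have h2 : Real.sqrt t * (Real.sqrt t * (a + b)) ≤ Real.sqrt t * Real.sqrt s := by
      nlinarith
    have := le_of_mul_le_mul_left h2 hst
    linarith
end
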